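/- arXiv:2102.07149 — 3 statements merged into one kernel-verified Lean document; each statement's English description precedes it below -/
import Mathlib

section
/- Let p ≥ 1 and k ≥ 2, and let X_1, …, X_p ∈ span{e_1, …, e_k}, with X_m = ∑_{j=1}^k λ_{m,j} e_j. Then for every i with 2 ≤ i ≤ 2n: (R^p·ω)(X_1, e_k, X_2, e_k, …, X_p, e_k, e_i, e_k) = λ_{1,1}·λ_{2,1}·…·λ_{p,1} · ε^p α^p · ω(e_i, e_k). -/
noncomputable section

/-- Gauss-equation curvature `R(X,Y)Z = h(Y,Z)·S(X) − h(X,Z)·S(Y)`. -/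
def RR {V : Type*} [AddCommGroup V] [Module ℝ V]
    (h : V →ₗ[ℝ] V →ₗ[ℝ] ℝ) (S : V →ₗ[ℝ] V) (X Y Z : V) : V :=
  h Y Z • S X - h X Z • S Y

/-- One application of the curvature action on an `m`-linear form (encoded as a
function on lists of vectors): `(R·T)(X,Y,Z₁,…,Zₘ) = −∑ᵢ T(Z₁,…,R(X,Y)Zᵢ,…,Zₘ)`;
the two newest (leftmost) arguments are consumed. -/
def RAct {V : Type*} [AddCommGroup V] [Module ℝ V]
    (h : V →ₗ[ℝ] V →ₗ[ℝ] ℝ) (S : V →ₗ[ℝ] V) (T : List V → ℝ) : List V → ℝ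
  | X :: Y :: Zs =>
      -∑ i ∈ Finset.range Zs.length, T (Zs.set i (RR h S X Y (Zs.getD i 0)))
  | _ => 0

/-- `R^p · ω`, as a function on lists of vectors (of length `2p+2`):
`R⁰·ω = ω` and `R^p·ω = R·(R^{p−1}·ω)`. -/
def Rpow {V : Type*} [AddCommGroup V] [Module ℝ V]
    (h : V →ₗ[ℝ] V →ₗ[ℝ] ℝ) (S : V →ₗ[ℝ] V) (ω : V →ₗ[ℝ] V →ₗ[ℝ] ℝ) (p : ℕ) :
    List V → ℝ :=
  (RAct h S)^[p] (fun l => ω (l.getD 0 0) (l.getD 1 0))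

/-- The list `X, Y, X, Y, …` with `p` pairs `(X, Y)`. -/
def pairList {V : Type*} (X Y : V) : ℕ → List V
  | 0 => []
  | p + 1 => X :: Y :: pairList X Y p

/-- The list `f 1, y, f 2, y, …, f p, y`. -/
def interleave {V : Type*} (f : ℕ → V) (y : V) : ℕ → List V
  | 0 => []
  | p + 1 => interleave f y p ++ [f (p + 1), y]

/-!
Write `v = e k` and `U = span {e 1, …, e k}`. Then `v` is an `h`-null eigenvector of `S`, `U` is
`S`-invariant and `h v (S u) = α * h v u` on `U`. Call a list `Y₁, Z₁, …, Y_q, Z_q, W, Z` admissible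
when `Yₘ ∈ U`, `Zₘ, Z ∈ ℝ ∙ v` and `h v W = 0`; replacing one entry `A` by `R(X, Z') A`
(`X ∈ U`, `Z' ∈ ℝ ∙ v`) keeps it admissible. By induction on `q`, the sum over all slots of
`R^q·ω` of these modified lists is `-α h(Z', X)` times `R^q·ω` of the list: in each pair `(Yₘ, Zₘ)`
the two slots cancel because `R(X, Z')` is `h`-skew there, and in the last pair only the `Z` slot
survives. Hence `R^{q+1}·ω (Y, Z, L) = α h(Z, Y) · R^q·ω (L)`, and iterating gives
`α^p ∏ h(v, Xₘ) · ω(e i, v)` with `h(v, Xₘ) = ε λ_{m,1}`.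
-/

open Finset Submodule

lemma interleave_succ' {V : Type*} (f : ℕ → V) (y : V) (p : ℕ) :
    interleave f y (p + 1) = f 1 :: y :: interleave (fun m => f (m + 1)) y p := by
  induction p with
  | zero => rfl
  | succ p ih =>
    rw [interleave, ih]
    rfl

section

variable {V : Type*} [AddCommGroup V] [Module ℝ V]
  {h ω : V →ₗ[ℝ] V →ₗ[ℝ] ℝ} {S : V →ₗ[ℝ] V} {α : ℝ} {U : Submodule ℝ V} {v : V}

lemma Rpow_succ_cons (q : ℕ) (Y Z : V) (L : List V) :
    Rpow h S ω (q + 1) (Y :: Z :: L) =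
      -∑ j ∈ range L.length, Rpow h S ω q (L.set j (RR h S Y Z (L.getD j 0))) := by
  rw [Rpow, Function.iterate_succ_apply']
  rfl

lemma Rpow_zero (W Z : V) : Rpow h S ω 0 [W, Z] = ω W Z := rfl

lemma RR_eq_of_apply_eq_smul {Z : V} (hZ : S Z = α • Z) (X W : V) :
    RR h S X Z W = h Z W • S X - (α * h X W) • Z := by
  rw [RR, hZ, smul_smul, mul_comm]

lemma apply_eq_zero_of_mem_span_singleton {z W : V} (hz : z ∈ ℝ ∙ v) (hW : h v W = 0) :
    h z W = 0 := by
  obtain ⟨c, rfl⟩ := mem_span_singleton.mp hz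
  simp [hW]

structure IsIsotropicEigenvector (h : V →ₗ[ℝ] V →ₗ[ℝ] ℝ) (S : V →ₗ[ℝ] V) (α : ℝ)
    (U : Submodule ℝ V) (v : V) : Prop where
  mem : v ∈ U
  mapsTo : ∀ u ∈ U, S u ∈ U
  apply_eq : S v = α • v
  isotropic : h v v = 0
  apply_apply_eq : ∀ u ∈ U, h v (S u) = α * h v u

inductive Admissible (h : V →ₗ[ℝ] V →ₗ[ℝ] ℝ) (U : Submodule ℝ V) (v : V) : ℕ → List V → Prop
  | pair {W Z : V} : h v W = 0 → Z ∈ ℝ ∙ v → Admissible h U v 0 [W, Z]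
  | cons {q : ℕ} {Y Z : V} {L : List V} :
      Y ∈ U → Z ∈ ℝ ∙ v → Admissible h U v q L → Admissible h U v (q + 1) (Y :: Z :: L)

lemma admissible_interleave {p : ℕ} {X : ℕ → V} (hX : ∀ m, 1 ≤ m → m ≤ p → X m ∈ U)
    {W : V} (hW : h v W = 0) : Admissible h U v p (interleave X v p ++ [W, v]) := by
  induction p generalizing X with
  | zero => exact .pair hW (mem_span_singleton_self v)
  | succ p ih =>
    rw [interleave_succ']
    exact .cons (hX 1 le_rfl (by omega)) (mem_span_singleton_self v)
      (ih fun m h1 h2 => hX (m + 1) (by omega) (by omega))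

namespace IsIsotropicEigenvector

lemma apply_eq_of_mem_span (H : IsIsotropicEigenvector h S α U v) {z : V} (hz : z ∈ ℝ ∙ v) :
    S z = α • z := by
  obtain ⟨c, rfl⟩ := mem_span_singleton.mp hz
  rw [map_smul, H.apply_eq, smul_comm]

lemma isotropic_of_mem_span (H : IsIsotropicEigenvector h S α U v) {z z' : V}
    (hz : z ∈ ℝ ∙ v) (hz' : z' ∈ ℝ ∙ v) : h z z' = 0 := by
  obtain ⟨c, rfl⟩ := mem_span_singleton.mp hz
  obtain ⟨c', rfl⟩ := mem_span_singleton.mp hz'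
  simp [H.isotropic]

lemma apply_apply_eq_of_mem_span (H : IsIsotropicEigenvector h S α U v) {z u : V}
    (hz : z ∈ ℝ ∙ v) (hu : u ∈ U) : h z (S u) = α * h z u := by
  obtain ⟨c, rfl⟩ := mem_span_singleton.mp hz
  simp only [map_smul, LinearMap.smul_apply, smul_eq_mul, H.apply_apply_eq u hu]
  ring

lemma RR_mem (H : IsIsotropicEigenvector h S α U v) {X Z : V} (u : V) (hX : X ∈ U)
    (hZ : Z ∈ ℝ ∙ v) : RR h S X Z u ∈ U := by
  rw [RR_eq_of_apply_eq_smul (H.apply_eq_of_mem_span hZ)]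
  exact sub_mem (smul_mem _ _ (H.mapsTo X hX))
    (smul_mem _ _ ((span_singleton_le_iff_mem _ _).mpr H.mem hZ))

lemma RR_eq_of_isotropic (H : IsIsotropicEigenvector h S α U v) {Z W : V} (X : V)
    (hZ : Z ∈ ℝ ∙ v) (hW : h Z W = 0) : RR h S X Z W = (-(α * h X W)) • Z := by
  rw [RR_eq_of_apply_eq_smul (H.apply_eq_of_mem_span hZ), hW, zero_smul, zero_sub, neg_smul]

lemma RR_mem_span (H : IsIsotropicEigenvector h S α U v) {Z z : V} (X : V)
    (hZ : Z ∈ ℝ ∙ v) (hz : z ∈ ℝ ∙ v) : RR h S X Z z ∈ ℝ ∙ v := by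
  rw [H.RR_eq_of_isotropic X hZ (H.isotropic_of_mem_span hZ hz)]
  exact smul_mem _ _ hZ

lemma apply_RR_eq_zero (H : IsIsotropicEigenvector h S α U v) {Z W : V} (X : V)
    (hZ : Z ∈ ℝ ∙ v) (hW : h v W = 0) : h v (RR h S X Z W) = 0 := by
  rw [H.RR_eq_of_isotropic X hZ (apply_eq_zero_of_mem_span_singleton hZ hW), map_smul,
    H.isotropic_of_mem_span (mem_span_singleton_self v) hZ, smul_zero]

lemma apply_RR_add_apply_RR (H : IsIsotropicEigenvector h S α U v)
    (hsymm : ∀ X Y, h X Y = h Y X) {X Y Z Z₀ : V} (hX : X ∈ U) (hZ : Z ∈ ℝ ∙ v)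
    (hZ₀ : Z₀ ∈ ℝ ∙ v) : h Z₀ (RR h S X Z Y) + h (RR h S X Z Z₀) Y = 0 := by
  rw [RR_eq_of_apply_eq_smul (H.apply_eq_of_mem_span hZ),
    H.RR_eq_of_isotropic X hZ (H.isotropic_of_mem_span hZ hZ₀)]
  simp only [map_sub, map_smul, LinearMap.smul_apply, smul_eq_mul,
    H.apply_apply_eq_of_mem_span hZ₀ hX, H.isotropic_of_mem_span hZ₀ hZ, hsymm X Z₀]
  ring

lemma admissible_set_RR (H : IsIsotropicEigenvector h S α U v) {q : ℕ} {L : List V}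
    (hL : Admissible h U v q L) {X Z : V} (hX : X ∈ U) (hZ : Z ∈ ℝ ∙ v) (j : ℕ) :
    Admissible h U v q (L.set j (RR h S X Z (L.getD j 0))) := by
  induction hL generalizing j with
  | pair hW hZ' =>
    match j with
    | 0 => exact .pair (H.apply_RR_eq_zero X hZ hW) hZ'
    | 1 => exact .pair hW (H.RR_mem_span X hZ hZ')
    | _ + 2 => exact .pair hW hZ'
  | cons hY hZ' hL ih =>
    match j with
    | 0 => exact .cons (H.RR_mem _ hX hZ) hZ' hL
    | 1 => exact .cons hY (H.RR_mem_span X hZ hZ') hL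
    | j + 2 => exact .cons hY hZ' (ih j)

lemma sum_Rpow_set_RR (H : IsIsotropicEigenvector h S α U v) (hsymm : ∀ X Y, h X Y = h Y X)
    (hω : ω v v = 0) (q : ℕ) :
    ∀ {L : List V}, Admissible h U v q L → ∀ {X Z : V}, X ∈ U → Z ∈ ℝ ∙ v →
      ∑ j ∈ range L.length, Rpow h S ω q (L.set j (RR h S X Z (L.getD j 0))) =
        -(α * h Z X) * Rpow h S ω q L := by
  induction q with
  | zero =>
    intro _ hL X Z hX hZ
    cases hL with | @pair W Z₀ hW hZ₀ => ?_
    simp only [List.length_cons, List.length_nil, sum_range_succ, range_zero, sum_empty,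
      zero_add, List.set_cons_zero, List.set_cons_succ, List.getD_cons_zero,
      List.getD_cons_succ, Rpow_zero]
    rw [H.RR_eq_of_isotropic X hZ (apply_eq_zero_of_mem_span_singleton hZ hW),
      H.RR_eq_of_isotropic X hZ (H.isotropic_of_mem_span hZ hZ₀)]
    obtain ⟨b, rfl⟩ := mem_span_singleton.mp hZ
    obtain ⟨d, rfl⟩ := mem_span_singleton.mp hZ₀
    simp only [map_smul, LinearMap.smul_apply, smul_eq_mul, hω, hsymm X v]
    ring
  | succ q ih =>
    intro _ hL X Z hX hZ
    cases hL with | @cons _ Y Z₀ L hY hZ₀ hL => ?_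
    have hrec : ∀ {L : List V}, Admissible h U v q L → ∀ {Y Z : V}, Z ∈ ℝ ∙ v → Y ∈ U →
        Rpow h S ω (q + 1) (Y :: Z :: L) = α * h Z Y * Rpow h S ω q L := by
      intro L hL Y Z hZ hY
      rw [Rpow_succ_cons, ih hL hY hZ]
      ring
    simp only [List.length_cons, sum_range_succ', List.set_cons_succ, List.getD_cons_succ,
      List.set_cons_zero, List.getD_cons_zero]
    rw [sum_congr rfl fun j _ => hrec (H.admissible_set_RR hL hX hZ j) hZ₀ hY, ← mul_sum,
      ih hL hX hZ, hrec hL hZ₀ (H.RR_mem _ hX hZ), hrec hL (H.RR_mem_span X hZ hZ₀) hY,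
      hrec hL hZ₀ hY]
    linear_combination (α * Rpow h S ω q L) * H.apply_RR_add_apply_RR hsymm hX hZ hZ₀ (Y := Y)

lemma Rpow_succ_cons_of_admissible (H : IsIsotropicEigenvector h S α U v)
    (hsymm : ∀ X Y, h X Y = h Y X) (hω : ω v v = 0) {q : ℕ} {L : List V}
    (hL : Admissible h U v q L) {Y Z : V} (hY : Y ∈ U) (hZ : Z ∈ ℝ ∙ v) :
    Rpow h S ω (q + 1) (Y :: Z :: L) = α * h Z Y * Rpow h S ω q L := by
  rw [Rpow_succ_cons, H.sum_Rpow_set_RR hsymm hω q hL hY hZ]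
  ring

lemma Rpow_interleave (H : IsIsotropicEigenvector h S α U v) (hsymm : ∀ X Y, h X Y = h Y X)
    (hω : ω v v = 0) {p : ℕ} {X : ℕ → V} (hX : ∀ m, 1 ≤ m → m ≤ p → X m ∈ U) {W : V}
    (hW : h v W = 0) :
    Rpow h S ω p (interleave X v p ++ [W, v]) =
      α ^ p * (∏ m ∈ range p, h v (X (m + 1))) * ω W v := by
  induction p generalizing X with
  | zero => simp [interleave, Rpow_zero]
  | succ p ih =>
    have hX' : ∀ m, 1 ≤ m → m ≤ p → X (m + 1) ∈ U :=
      fun m h1 h2 => hX (m + 1) (by omega) (by omega)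
    rw [interleave_succ', List.cons_append, List.cons_append,
      H.Rpow_succ_cons_of_admissible hsymm hω (admissible_interleave hX' hW)
        (hX 1 le_rfl (by omega)) (mem_span_singleton_self v),
      ih hX', prod_range_succ']
    ring

end IsIsotropicEigenvector

section JordanBlock

variable {e : ℕ → V} {k : ℕ}

lemma span_jordanBlock_le_comap (hS1 : ∀ i, 1 ≤ i → i ≤ k - 1 → S (e i) = α • e i + e (i + 1))
    (hS2 : S (e k) = α • e k) :
    span ℝ (e '' Set.Icc 1 k) ≤ (span ℝ (e '' Set.Icc 1 k)).comap S := by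
  have he : ∀ j, 1 ≤ j → j ≤ k → e j ∈ span ℝ (e '' Set.Icc 1 k) :=
    fun j h1 h2 => subset_span ⟨j, ⟨h1, h2⟩, rfl⟩
  rw [span_le]
  rintro _ ⟨j, ⟨hj1, hjk⟩, rfl⟩
  rcases hjk.eq_or_lt with rfl | hjk
  · simpa [hS2] using smul_mem _ α (he j hj1 le_rfl)
  · simpa [hS1 j hj1 (by omega)] using
      add_mem (smul_mem _ α (he j hj1 hjk.le)) (he (j + 1) (by omega) hjk)

lemma span_jordanBlock_le_ker (hS1 : ∀ i, 1 ≤ i → i ≤ k - 1 → S (e i) = α • e i + e (i + 1))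
    (hS2 : S (e k) = α • e k) (hnull : ∀ j, 2 ≤ j → j ≤ k → h (e k) (e j) = 0) :
    span ℝ (e '' Set.Icc 1 k) ≤ LinearMap.ker (h (e k) ∘ₗ S - α • h (e k)) := by
  rw [span_le]
  rintro _ ⟨j, ⟨hj1, hjk⟩, rfl⟩
  rcases hjk.eq_or_lt with rfl | hjk
  · simp [hS2]
  · simp [hS1 j hj1 (by omega), hnull (j + 1) (by omega) hjk]

lemma isIsotropicEigenvector_jordanBlock (hk : 2 ≤ k)
    (hS1 : ∀ i, 1 ≤ i → i ≤ k - 1 → S (e i) = α • e i + e (i + 1))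
    (hS2 : S (e k) = α • e k) (hnull : ∀ j, 2 ≤ j → j ≤ k → h (e k) (e j) = 0) :
    IsIsotropicEigenvector h S α (span ℝ (e '' Set.Icc 1 k)) (e k) where
  mem := subset_span ⟨k, ⟨by omega, le_rfl⟩, rfl⟩
  mapsTo u hu := span_jordanBlock_le_comap hS1 hS2 hu
  apply_eq := hS2
  isotropic := hnull k hk le_rfl
  apply_apply_eq u hu := by
    simpa [sub_eq_zero] using span_jordanBlock_le_ker hS1 hS2 hnull hu

lemma apply_sum_jordanBlock {ε : ℝ} (hk : 1 ≤ k) (h1 : h (e k) (e 1) = ε)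
    (hnull : ∀ j, 2 ≤ j → j ≤ k → h (e k) (e j) = 0) (c : ℕ → ℝ) :
    h (e k) (∑ j ∈ Icc 1 k, c j • e j) = ε * c 1 := by
  rw [map_sum, sum_eq_single_of_mem 1 (mem_Icc.mpr ⟨le_rfl, hk⟩)]
  · rw [map_smul, h1, smul_eq_mul, mul_comm]
  · intro j hj hj1
    rw [map_smul, hnull j (by grind) (mem_Icc.mp hj).2, smul_zero]

end JordanBlock

end

theorem stmt5_general
    {V : Type*} [AddCommGroup V] [Module ℝ V]
    (n : ℕ) (e : ℕ → V)
    (h ω : V →ₗ[ℝ] V →ₗ[ℝ] ℝ)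
    (hsymm : ∀ X Y, h X Y = h Y X)
    (halt : ∀ X, ω X X = 0)
    (S : V →ₗ[ℝ] V)
    (k : ℕ) (hk2 : 2 ≤ k) (hk : k ≤ 2 * n)
    (α ε : ℝ)
    (hS1 : ∀ i, 1 ≤ i → i ≤ k - 1 → S (e i) = α • e i + e (i + 1))
    (hS2 : S (e k) = α • e k)
    (hh1 : ∀ i j, 1 ≤ i → i ≤ k → 1 ≤ j → j ≤ k → i + j = k + 1 → h (e i) (e j) = ε)
    (hh0 : ∀ i j, 1 ≤ i → i ≤ 2 * n → 1 ≤ j → j ≤ 2 * n → min i j ≤ k →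
      ¬(i ≤ k ∧ j ≤ k ∧ i + j = k + 1) → h (e i) (e j) = 0)
    (p : ℕ)
    (X : ℕ → V) (lam : ℕ → ℕ → ℝ)
    (hX : ∀ m, 1 ≤ m → m ≤ p → X m = ∑ j ∈ Finset.Icc 1 k, lam m j • e j)
    (i : ℕ) (hi2 : 2 ≤ i) (hi : i ≤ 2 * n) :
    Rpow h S ω p (interleave X (e k) p ++ [e i, e k]) =
      (∏ m ∈ Finset.Icc 1 p, lam m 1) * ε ^ p * α ^ p * ω (e i) (e k) := by
  have hnull : ∀ j, 2 ≤ j → j ≤ 2 * n → h (e k) (e j) = 0 := fun j hj2 hj =>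
    hh0 k j (by omega) hk (by omega) hj (min_le_left _ _) (by omega)
  have hnull' : ∀ j, 2 ≤ j → j ≤ k → h (e k) (e j) = 0 := fun j hj2 hjk =>
    hnull j hj2 (hjk.trans hk)
  have H := isIsotropicEigenvector_jordanBlock hk2 hS1 hS2 hnull'
  have hXU : ∀ m, 1 ≤ m → m ≤ p → X m ∈ span ℝ (e '' Set.Icc 1 k) := fun m h1 h2 => by
    rw [hX m h1 h2]
    exact sum_mem fun j hj => smul_mem _ _ (subset_span ⟨j, by simpa using hj, rfl⟩)
  have hXh : ∀ m ∈ range p, h (e k) (X (m + 1)) = ε * lam (m + 1) 1 := fun m hm => by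
    rw [hX (m + 1) (by omega) (by simpa using hm),
      apply_sum_jordanBlock (by omega) (hh1 k 1 (by omega) le_rfl le_rfl (by omega) rfl) hnull']
  rw [H.Rpow_interleave hsymm (halt _) hXU (hnull i hi2 hi), prod_congr rfl hXh,
    prod_mul_distrib, prod_const, card_range, range_eq_Ico, prod_Ico_add' (fun m => lam m 1),
    zero_add, Ico_add_one_right_eq_Icc]
  ring

theorem stmt5
    {V : Type*} [AddCommGroup V] [Module ℝ V]
    (n : ℕ) (hn : 2 ≤ n) (e : ℕ → V)
    (hbasis : ∃ b : Module.Basis (Fin (2 * n)) ℝ V, ∀ i : Fin (2 * n), b i = e (i.1 + 1))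
    (h ω : V →ₗ[ℝ] V →ₗ[ℝ] ℝ)
    (hsymm : ∀ X Y, h X Y = h Y X)
    (halt : ∀ X, ω X X = 0)
    (S : V →ₗ[ℝ] V)
    (k : ℕ) (hk2 : 2 ≤ k) (hk : k ≤ 2 * n)
    (α ε : ℝ) (hε : ε = 1 ∨ ε = -1)
    (hS1 : ∀ i, 1 ≤ i → i ≤ k - 1 → S (e i) = α • e i + e (i + 1))
    (hS2 : S (e k) = α • e k)
    (hh1 : ∀ i j, 1 ≤ i → i ≤ k → 1 ≤ j → j ≤ k → i + j = k + 1 → h (e i) (e j) = ε)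
    (hh0 : ∀ i j, 1 ≤ i → i ≤ 2 * n → 1 ≤ j → j ≤ 2 * n → min i j ≤ k →
      ¬(i ≤ k ∧ j ≤ k ∧ i + j = k + 1) → h (e i) (e j) = 0)
    (p : ℕ) (hp : 1 ≤ p)
    (X : ℕ → V) (lam : ℕ → ℕ → ℝ)
    (hX : ∀ m, 1 ≤ m → m ≤ p → X m = ∑ j ∈ Finset.Icc 1 k, lam m j • e j)
    (i : ℕ) (hi2 : 2 ≤ i) (hi : i ≤ 2 * n) :
    Rpow h S ω p (interleave X (e k) p ++ [e i, e k]) =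
      (∏ m ∈ Finset.Icc 1 p, lam m 1) * ε ^ p * α ^ p * ω (e i) (e k) :=
  stmt5_general n e h ω hsymm halt S k hk2 hk α ε hS1 hS2 hh1 hh0 p X lam hX i hi2 hi
end
end

section
/- Let k > 3 and p ≥ 1. Then: (1) (R^p·ω)(e_1, e_{k−1}, …, e_1, e_{k−1}) with p+1 pairs (e_1, e_{k−1}) equals 0; (2) (R^p·ω)(e_1, e_{k−1}, …, e_1, e_{k−1}, e_2, e_{k−1}) with p leading pairs (e_1, e_{k−1}) equals (−1)^p ε^p (α ω(e_1, e_{k−1}) + ω(e_2, e_{k−1})); (3) for every i ∈ {1, …, 2n} \ {2, k}: (R^p·ω)(e_1, e_{k−1}, …, e_1, e_{k−1}, e_i, e_k) with p leading pairs (e_1, e_{k−1}) equals ε^p (α ω(e_i, e_{k−1}) + ω(e_i, e_k)). -/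
noncomputable section

/-!
Let `A = R(e₁, e_{k-1})`, so `A Z = h(e_{k-1}, Z) S e₁ − h(e₁, Z) S e_{k-1}`. Since `A` kills
`e₁` and `e_{k-1}`, in `R·T` every term that applies `A` to an earlier pair `(e₁, e_{k-1})`
vanishes; hence `(R^p·ω)(e₁, e_{k-1}, …, e₁, e_{k-1}, u, v)` is `A^p·ω` evaluated at `(u, v)`,
where `A` acts on bilinear forms as a derivation: `(A·B)(u, v) = −B(Au, v) − B(u, Av)`.

For the antidiagonal `h`, `A e₂ = ε S e₁`, `A e_k = −ε S e_{k-1}` and `A e_i = 0` otherwise.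
So `S e₁ = α e₁ + e₂` and `S e_{k-1} = α e_{k-1} + e_k` are eigenvectors of `A` for `ε` and
`−ε`, with the same images as `e₂` and `e_k`, and `A^p·ω` multiplies `ω(u, v)` by
`(−(c + d))^p` on eigenvectors `u, v` for `c, d`.
-/

lemma eq_or_eq_of_mem_pairList {α : Type*} {X Y x : α} {p : ℕ} (hx : x ∈ pairList X Y p) :
    x = X ∨ x = Y := by
  induction p with
  | zero => simp [pairList] at hx
  | succ p ih =>
    simp only [pairList, List.mem_cons] at hx
    rcases hx with hx | hx | hx
    exacts [Or.inl hx, Or.inr hx, ih hx]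

lemma pairList_succ_eq_append {α : Type*} (X Y : α) (p : ℕ) :
    pairList X Y (p + 1) = pairList X Y p ++ [X, Y] := by
  induction p with
  | zero => rfl
  | succ p ih => exact congrArg (X :: Y :: ·) ih

lemma length_pairList {α : Type*} (X Y : α) (p : ℕ) : (pairList X Y p).length = 2 * p := by
  induction p with
  | zero => rfl
  | succ p ih => simp only [pairList, List.length_cons, ih]; ring

section DerivationAction

variable {V : Type*} [AddCommGroup V] [Module ℝ V]
  (A : V →ₗ[ℝ] V) (B : V →ₗ[ℝ] V →ₗ[ℝ] ℝ)

def derivAct : ℕ → V →ₗ[ℝ] V →ₗ[ℝ] ℝ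
  | 0 => B
  | p + 1 => -((derivAct p).comp A + (derivAct p).compl₂ A)

@[simp]
lemma derivAct_zero : derivAct A B 0 = B := rfl

lemma derivAct_succ_apply (p : ℕ) (u v : V) :
    derivAct A B (p + 1) u v = -(derivAct A B p (A u) v + derivAct A B p u (A v)) := rfl

lemma derivAct_apply_of_eigen {u v : V} {c d : ℝ} (hu : A u = c • u) (hv : A v = d • v)
    (p : ℕ) : derivAct A B p u v = (-(c + d)) ^ p * B u v := by
  induction p with
  | zero => simp
  | succ p ih =>
    rw [derivAct_succ_apply, hu, hv, map_smul, LinearMap.smul_apply, map_smul, ih]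
    simp only [smul_eq_mul]
    ring

lemma derivAct_succ_apply_congr_left {u u' v : V} (hu : A u = A u') (hv : A v = 0) (p : ℕ) :
    derivAct A B (p + 1) u v = derivAct A B (p + 1) u' v := by
  simp only [derivAct_succ_apply, hu, hv, map_zero]

lemma derivAct_succ_apply_congr_right {u v v' : V} (hu : A u = 0) (hv : A v = A v') (p : ℕ) :
    derivAct A B (p + 1) u v = derivAct A B (p + 1) u v' := by
  simp only [derivAct_succ_apply, hu, hv, map_zero, LinearMap.zero_apply]

end DerivationAction

section CurvatureAction

variable {V : Type*} [AddCommGroup V] [Module ℝ V]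
  (h : V →ₗ[ℝ] V →ₗ[ℝ] ℝ) (S : V →ₗ[ℝ] V) (ω : V →ₗ[ℝ] V →ₗ[ℝ] ℝ)

def curvOp (X Y : V) : V →ₗ[ℝ] V :=
  (h Y).smulRight (S X) - (h X).smulRight (S Y)

lemma curvOp_apply (X Y Z : V) : curvOp h S X Y Z = RR h S X Y Z := rfl

@[simp]
lemma RR_zero_left (Y Z : V) : RR h S 0 Y Z = 0 := by simp [RR]

@[simp]
lemma RR_zero_middle (X Z : V) : RR h S X 0 Z = 0 := by simp [RR]

@[simp]
lemma RR_zero_right (X Y : V) : RR h S X Y 0 = 0 := by simp [RR]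

lemma Rpow_zero_cons_cons (x y : V) (l : List V) : Rpow h S ω 0 (x :: y :: l) = ω x y := by
  simp [Rpow]

lemma Rpow_succ_cons_cons (p : ℕ) (X Y : V) (Zs : List V) :
    Rpow h S ω (p + 1) (X :: Y :: Zs) =
      -∑ j ∈ Finset.range Zs.length, Rpow h S ω p (Zs.set j (RR h S X Y (Zs.getD j 0))) := by
  show (RAct h S)^[p + 1] _ _ = _
  rw [Function.iterate_succ_apply']
  rfl

lemma Rpow_eq_zero_of_getD_eq_zero (p : ℕ) {l : List V} (hl : l.length = 2 * p + 2) {i : ℕ}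
    (hi : i < l.length) (h0 : l.getD i 0 = 0) : Rpow h S ω p l = 0 := by
  induction p generalizing l i with
  | zero =>
    obtain ⟨x, y, rfl⟩ := List.length_eq_two.mp hl
    simp only [List.length_cons, List.length_nil] at hi
    interval_cases i <;> simp_all [Rpow_zero_cons_cons]
  | succ p ih =>
    obtain ⟨X, Y, Zs, rfl⟩ : ∃ X Y Zs, l = X :: Y :: Zs := by
      match l, hl with
      | X :: Y :: Zs, _ => exact ⟨X, Y, Zs, rfl⟩
    have hZs : Zs.length = 2 * p + 2 := by simp only [List.length_cons] at hl; omega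
    rw [Rpow_succ_cons_cons, neg_eq_zero]
    refine Finset.sum_eq_zero fun j hj => ?_
    have hj : j < Zs.length := Finset.mem_range.mp hj
    have at_j (hRj : RR h S X Y (Zs.getD j 0) = 0) :
        Rpow h S ω p (Zs.set j (RR h S X Y (Zs.getD j 0))) = 0 :=
      ih (by simpa using hZs) (i := j) (by simpa using hj) (by simpa [List.getD, hj] using hRj)
    match i with
    | 0 => exact at_j (by simp_all)
    | 1 => exact at_j (by simp_all)
    | m + 2 =>
      have hm : m < Zs.length := by simp only [List.length_cons] at hi; omega
      have hZm : Zs.getD m 0 = 0 := by simpa using h0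
      by_cases hjm : j = m
      · subst hjm
        exact at_j (by rw [hZm, RR_zero_right])
      · exact ih (by simpa using hZs) (i := m) (by simpa using hm)
          (by simpa [List.getD, List.getElem?_set_ne hjm] using hZm)

lemma Rpow_succ_cons_cons_append (p : ℕ) (X Y u v : V) {L : List V} (hL : L.length = 2 * p)
    (hL0 : ∀ x ∈ L, RR h S X Y x = 0) :
    Rpow h S ω (p + 1) (X :: Y :: (L ++ [u, v])) =
      -(Rpow h S ω p (L ++ [RR h S X Y u, v]) + Rpow h S ω p (L ++ [u, RR h S X Y v])) := by
  have hlen : (L ++ [u, v]).length = 2 * p + 2 := by simp [hL]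
  rw [Rpow_succ_cons_cons, hlen, Finset.sum_range_succ, Finset.sum_range_succ]
  have front : ∑ j ∈ Finset.range (2 * p),
      Rpow h S ω p ((L ++ [u, v]).set j (RR h S X Y ((L ++ [u, v]).getD j 0))) = 0 := by
    refine Finset.sum_eq_zero fun j hj => ?_
    have hj : j < L.length := by simpa [hL] using hj
    refine Rpow_eq_zero_of_getD_eq_zero h S ω p (by rw [List.length_set, hlen]) (i := j)
      (by rw [List.length_set, hlen]; omega) ?_
    simp [List.getD, List.getElem?_append_left, hj, hL0 _ (List.getElem_mem hj)]
  rw [front, zero_add, show 2 * p = L.length + 0 by omega, List.set_append_right _ _ (by omega),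
    List.set_append_right _ _ (by omega), List.getD_append_right _ _ _ _ (by omega),
    List.getD_append_right _ _ _ _ (by omega)]
  simp

lemma Rpow_pairList_append {X Y : V} (hX : curvOp h S X Y X = 0) (hY : curvOp h S X Y Y = 0)
    (p : ℕ) (u v : V) :
    Rpow h S ω p (pairList X Y p ++ [u, v]) = derivAct (curvOp h S X Y) ω p u v := by
  induction p generalizing u v with
  | zero => exact Rpow_zero_cons_cons h S ω u v []
  | succ p ih =>
    have hL0 : ∀ x ∈ pairList X Y p, RR h S X Y x = 0 := fun x hx => by
      rcases eq_or_eq_of_mem_pairList hx with rfl | rfl <;> assumption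
    rw [pairList, List.cons_append, List.cons_append,
      Rpow_succ_cons_cons_append h S ω p X Y u v (length_pairList X Y p) hL0, ih, ih,
      derivAct_succ_apply, curvOp_apply, curvOp_apply]

end CurvatureAction

lemma curvOp_apply_e {V : Type*} [AddCommGroup V] [Module ℝ V] {e : ℕ → V}
    {h : V →ₗ[ℝ] V →ₗ[ℝ] ℝ} {S : V →ₗ[ℝ] V} {n k : ℕ} {ε : ℝ}
    (hk2 : 2 ≤ k) (hk : k ≤ 2 * n)
    (hh1 : ∀ i j, 1 ≤ i → i ≤ k → 1 ≤ j → j ≤ k → i + j = k + 1 → h (e i) (e j) = ε)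
    (hh0 : ∀ i j, 1 ≤ i → i ≤ 2 * n → 1 ≤ j → j ≤ 2 * n → min i j ≤ k →
      ¬(i ≤ k ∧ j ≤ k ∧ i + j = k + 1) → h (e i) (e j) = 0)
    (j : ℕ) (hj : 1 ≤ j) (hjn : j ≤ 2 * n) :
    curvOp h S (e 1) (e (k - 1)) (e j) =
      (if j = 2 then ε else 0) • S (e 1) - (if j = k then ε else 0) • S (e (k - 1)) := by
  have antidiag : ∀ i, 1 ≤ i → i ≤ k → h (e i) (e j) = if i + j = k + 1 then ε else 0 :=
    fun i hi hik => by
      split_ifs with hij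
      · exact hh1 i j hi hik hj (by omega) hij
      · exact hh0 i j hi (by omega) hj hjn (by omega) fun H => hij H.2.2
  rw [curvOp_apply, RR, antidiag (k - 1) (by omega) (by omega), antidiag 1 le_rfl (by omega)]
  simp only [show k - 1 + j = k + 1 ↔ j = 2 by omega, show 1 + j = k + 1 ↔ j = k by omega]

theorem stmt7_general
    {V : Type*} [AddCommGroup V] [Module ℝ V]
    (n : ℕ) (e : ℕ → V)
    (h ω : V →ₗ[ℝ] V →ₗ[ℝ] ℝ)
    (S : V →ₗ[ℝ] V)
    (k : ℕ) (hk2 : 2 ≤ k) (hk : k ≤ 2 * n)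
    (α ε : ℝ)
    (hS1 : ∀ i, 1 ≤ i → i ≤ k - 1 → S (e i) = α • e i + e (i + 1))
    (hh1 : ∀ i j, 1 ≤ i → i ≤ k → 1 ≤ j → j ≤ k → i + j = k + 1 → h (e i) (e j) = ε)
    (hh0 : ∀ i j, 1 ≤ i → i ≤ 2 * n → 1 ≤ j → j ≤ 2 * n → min i j ≤ k →
      ¬(i ≤ k ∧ j ≤ k ∧ i + j = k + 1) → h (e i) (e j) = 0)
    (hk3 : 3 < k)
    (p : ℕ) (hp : 1 ≤ p) :
    Rpow h S ω p (pairList (e 1) (e (k - 1)) (p + 1)) = 0 ∧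
    Rpow h S ω p (pairList (e 1) (e (k - 1)) p ++ [e 2, e (k - 1)]) =
      (-1) ^ p * ε ^ p * (α * ω (e 1) (e (k - 1)) + ω (e 2) (e (k - 1))) ∧
    ∀ i, 1 ≤ i → i ≤ 2 * n → i ≠ 2 → i ≠ k →
      Rpow h S ω p (pairList (e 1) (e (k - 1)) p ++ [e i, e k]) =
        ε ^ p * (α * ω (e i) (e (k - 1)) + ω (e i) (e k)) := by
  obtain ⟨q, rfl⟩ : ∃ q, p = q + 1 := ⟨p - 1, by omega⟩
  have hA := curvOp_apply_e (S := S) hk2 hk hh1 hh0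
  have hX : curvOp h S (e 1) (e (k - 1)) (e 1) = 0 := by
    simp [hA 1 le_rfl (by omega), show 1 ≠ k by omega]
  have hY : curvOp h S (e 1) (e (k - 1)) (e (k - 1)) = 0 := by
    simp [hA (k - 1) (by omega) (by omega), show k - 1 ≠ 2 by omega,
      show k - 1 ≠ k by omega]
  simp only [pairList_succ_eq_append _ _ (q + 1), Rpow_pairList_append h S ω hX hY]
  generalize curvOp h S (e 1) (e (k - 1)) = A at hA hX hY ⊢
  have hSe1 : S (e 1) = α • e 1 + e 2 := hS1 1 le_rfl (by omega)
  have hSek : S (e (k - 1)) = α • e (k - 1) + e k := by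
    simpa [show k - 1 + 1 = k by omega] using hS1 (k - 1) (by omega) le_rfl
  have hA2 : A (e 2) = A (S (e 1)) := by rw [hSe1, map_add, map_smul, hX, smul_zero, zero_add]
  have hAk : A (e k) = A (S (e (k - 1))) := by
    rw [hSek, map_add, map_smul, hY, smul_zero, zero_add]
  have hw : A (S (e 1)) = ε • S (e 1) := by
    simp [← hA2, hA 2 (by omega) (by omega), show 2 ≠ k by omega]
  have hw' : A (S (e (k - 1))) = (-ε) • S (e (k - 1)) := by
    simp [← hAk, hA k (by omega) hk, show k ≠ 2 by omega]
  refine ⟨by simp [derivAct_succ_apply, hX, hY], ?_, fun i hi hin hi2 hik => ?_⟩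
  · rw [derivAct_succ_apply_congr_left A ω hA2 hY,
      derivAct_apply_of_eigen A ω hw (hY.trans (zero_smul ℝ _).symm), hSe1]
    simp only [map_add, map_smul, LinearMap.add_apply, LinearMap.smul_apply, smul_eq_mul]
    ring
  · have hAi : A (e i) = 0 := by simp [hA i hi hin, hi2, hik]
    rw [derivAct_succ_apply_congr_right A ω hAi hAk,
      derivAct_apply_of_eigen A ω (hAi.trans (zero_smul ℝ _).symm) hw', hSek]
    simp only [map_add, map_smul, smul_eq_mul]
    ring

theorem stmt7
    {V : Type*} [AddCommGroup V] [Module ℝ V]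
    (n : ℕ) (hn : 2 ≤ n) (e : ℕ → V)
    (hbasis : ∃ b : Module.Basis (Fin (2 * n)) ℝ V, ∀ i : Fin (2 * n), b i = e (i.1 + 1))
    (h ω : V →ₗ[ℝ] V →ₗ[ℝ] ℝ)
    (hsymm : ∀ X Y, h X Y = h Y X)
    (halt : ∀ X, ω X X = 0)
    (S : V →ₗ[ℝ] V)
    (k : ℕ) (hk2 : 2 ≤ k) (hk : k ≤ 2 * n)
    (α ε : ℝ) (hε : ε = 1 ∨ ε = -1)
    (hS1 : ∀ i, 1 ≤ i → i ≤ k - 1 → S (e i) = α • e i + e (i + 1))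
    (hS2 : S (e k) = α • e k)
    (hh1 : ∀ i j, 1 ≤ i → i ≤ k → 1 ≤ j → j ≤ k → i + j = k + 1 → h (e i) (e j) = ε)
    (hh0 : ∀ i j, 1 ≤ i → i ≤ 2 * n → 1 ≤ j → j ≤ 2 * n → min i j ≤ k →
      ¬(i ≤ k ∧ j ≤ k ∧ i + j = k + 1) → h (e i) (e j) = 0)
    (hk3 : 3 < k)
    (p : ℕ) (hp : 1 ≤ p) :
    Rpow h S ω p (pairList (e 1) (e (k - 1)) (p + 1)) = 0 ∧
    Rpow h S ω p (pairList (e 1) (e (k - 1)) p ++ [e 2, e (k - 1)]) =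
      (-1) ^ p * ε ^ p * (α * ω (e 1) (e (k - 1)) + ω (e 2) (e (k - 1))) ∧
    ∀ i, 1 ≤ i → i ≤ 2 * n → i ≠ 2 → i ≠ k →
      Rpow h S ω p (pairList (e 1) (e (k - 1)) p ++ [e i, e k]) =
        ε ^ p * (α * ω (e i) (e (k - 1)) + ω (e i) (e k)) :=
  stmt7_general n e h ω S k hk2 hk α ε hS1 hh1 hh0 hk3 p hp
end
end

section
/- For every p ≥ 1: (R^p·ω)(e_1, e_2, e_1, e_2, …, e_1, e_2), with p+1 pairs (e_1, e_2), equals (−1)^p ε^p p! ω(e_1, e_2). -/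
noncomputable section

/-!
Along the list `e₁, z₁, e₁, z₂, …` with every `zᵢ ∈ {e₂, S e₁}`, the endomorphism `R(e₁, z)`
kills `e₁` and sends every `zᵢ` to `ε S e₁`. Hence one application of `R` turns the value on
such a list of `p + 1` pairs into `-ε` times a sum of `p` equal values on lists of `p` pairs of
the same shape, the scalar and the zero vector being pulled out by the multilinearity of `R^k·ω`.
As `ω(e₁, S e₁) = ω(e₁, e₂)`, induction gives `(-ε)^p p! ω(e₁, e₂)`.
-/

open Finset

section Homogeneity

variable {V : Type*} [AddCommGroup V] [Module ℝ V] (h : V →ₗ[ℝ] V →ₗ[ℝ] ℝ) (S : V →ₗ[ℝ] V)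

lemma RR_smul_left (c : ℝ) (X Y Z : V) : RR h S (c • X) Y Z = c • RR h S X Y Z := by
  simp [RR, smul_sub, smul_smul, mul_comm]

lemma RR_smul_middle (c : ℝ) (X Y Z : V) : RR h S X (c • Y) Z = c • RR h S X Y Z := by
  simp [RR, smul_sub, smul_smul, mul_comm]

lemma RR_smul_right (c : ℝ) (X Y Z : V) : RR h S X Y (c • Z) = c • RR h S X Y Z := by
  simp [RR, smul_sub, smul_smul]

lemma RAct_cons_cons (T : List V → ℝ) (X Y : V) (Zs : List V) :
    RAct h S T (X :: Y :: Zs) =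
      -∑ i ∈ range Zs.length, T (Zs.set i (RR h S X Y (Zs.getD i 0))) := rfl

lemma Rpow_succ (ω : V →ₗ[ℝ] V →ₗ[ℝ] ℝ) (k : ℕ) :
    Rpow h S ω (k + 1) = RAct h S (Rpow h S ω k) :=
  Function.iterate_succ_apply' ..

-- Lists are bounded in length because `R^k·ω` ignores every argument beyond its `2k + 2` slots.
def IsHomogeneousUpTo (N : ℕ) (T : List V → ℝ) : Prop :=
  ∀ (l : List V) (i : ℕ), i < l.length → l.length ≤ N →
    ∀ (c : ℝ) (v : V), T (l.set i (c • v)) = c * T (l.set i v)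

lemma neg_sum_range_eq_mul {n : ℕ} {f g : ℕ → ℝ} (c : ℝ) (hfg : ∀ j < n, f j = c * g j) :
    -∑ j ∈ range n, f j = c * -∑ j ∈ range n, g j := by
  rw [sum_congr rfl fun j hj => hfg j (mem_range.1 hj), ← mul_sum, mul_neg]

lemma IsHomogeneousUpTo.RAct {N : ℕ} {T : List V → ℝ} (hT : IsHomogeneousUpTo N T) :
    IsHomogeneousUpTo (N + 2) (RAct h S T) := by
  intro l i hi hl c v
  rcases l with _ | ⟨X, _ | ⟨Y, Zs⟩⟩
  · simp at hi
  · obtain rfl : i = 0 := by simpa using hi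
    simp [_root_.RAct]
  simp only [List.length_cons] at hi hl
  have hT' : ∀ (l : List V) (j : ℕ), l.length = Zs.length → j < l.length → ∀ (c : ℝ) (v : V),
      T (l.set j (c • v)) = c * T (l.set j v) := fun l j hlen hj => hT l j hj (by omega)
  rcases i with _ | _ | j
  · simp only [List.set_cons_zero, RAct_cons_cons]
    refine neg_sum_range_eq_mul c fun m hm => ?_
    rw [RR_smul_left, hT' Zs m rfl hm]
  · simp only [List.set_cons_succ, List.set_cons_zero, RAct_cons_cons]
    refine neg_sum_range_eq_mul c fun m hm => ?_
    rw [RR_smul_middle, hT' Zs m rfl hm]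
  · have hj : j < Zs.length := by omega
    simp only [List.set_cons_succ, RAct_cons_cons, List.length_set]
    refine neg_sum_range_eq_mul c fun m hm => ?_
    rcases eq_or_ne m j with rfl | hmj
    · simp only [List.getD_eq_getElem?_getD, List.getElem?_set_self hm, Option.getD_some,
        List.set_set, RR_smul_right]
      exact hT' Zs m rfl hm _ _
    · simp only [List.getD_eq_getElem?_getD, List.getElem?_set_ne hmj.symm]
      rw [List.set_comm _ _ hmj.symm, List.set_comm _ _ hmj.symm]
      exact hT' _ j (by simp) (by simpa using hj) _ _

lemma isHomogeneousUpTo_two_bilinear (ω : V →ₗ[ℝ] V →ₗ[ℝ] ℝ) :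
    IsHomogeneousUpTo 2 (fun l : List V => ω (l.getD 0 0) (l.getD 1 0)) := by
  intro l i hi hl c v
  rcases l with _ | ⟨a, _ | ⟨b, l⟩⟩
  · simp at hi
  · obtain rfl : i = 0 := by simpa using hi
    simp
  · obtain rfl : l = [] :=
      List.eq_nil_of_length_eq_zero (by simp only [List.length_cons] at hl; omega)
    obtain rfl | rfl : i = 0 ∨ i = 1 := by simp at hi; omega
    all_goals simp

lemma isHomogeneousUpTo_Rpow (ω : V →ₗ[ℝ] V →ₗ[ℝ] ℝ) (k : ℕ) :
    IsHomogeneousUpTo (2 * k + 2) (Rpow h S ω k) := by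
  induction k with
  | zero => exact isHomogeneousUpTo_two_bilinear ω
  | succ k ih => rw [Rpow_succ]; exact ih.RAct h S

end Homogeneity

def pairWith {α : Type*} (x : α) : List α → List α
  | [] => []
  | z :: zs => x :: z :: pairWith x zs

section PairWith

variable {α : Type*} (x : α)

@[simp]
lemma length_pairWith : ∀ zs : List α, (pairWith x zs).length = 2 * zs.length
  | [] => rfl
  | z :: zs => by simp [pairWith, length_pairWith zs]; ring

lemma pairList_eq_pairWith (y : α) : ∀ k, pairList x y k = pairWith x (List.replicate k y)
  | 0 => rfl
  | k + 1 => congrArg (x :: y :: ·) (pairList_eq_pairWith y k)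

lemma getD_pairWith_two_mul (d : α) : ∀ (zs : List α) (m : ℕ), m < zs.length →
    (pairWith x zs).getD (2 * m) d = x
  | _ :: _, 0, _ => rfl
  | _ :: zs, m + 1, hm => getD_pairWith_two_mul d zs m (by simpa using hm)

lemma getD_pairWith_two_mul_add_one (d : α) : ∀ (zs : List α) (m : ℕ),
    (pairWith x zs).getD (2 * m + 1) d = zs.getD m d
  | [], _ => rfl
  | _ :: _, 0 => rfl
  | _ :: zs, m + 1 => getD_pairWith_two_mul_add_one d zs m

lemma set_pairWith_two_mul_add_one : ∀ (zs : List α) (m : ℕ) (v : α),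
    (pairWith x zs).set (2 * m + 1) v = pairWith x (zs.set m v)
  | [], _, _ => rfl
  | _ :: _, 0, _ => rfl
  | z :: zs, m + 1, v => congrArg (x :: z :: ·) (set_pairWith_two_mul_add_one zs m v)

end PairWith

lemma sum_range_two_mul {M : Type*} [AddCommMonoid M] (n : ℕ) (g : ℕ → M) :
    ∑ i ∈ range (2 * n), g i = ∑ m ∈ range n, (g (2 * m) + g (2 * m + 1)) := by
  induction n with
  | zero => simp
  | succ n ih => rw [Nat.mul_succ, sum_range_succ, sum_range_succ, sum_range_succ, ih, add_assoc]

section Computation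

variable {V : Type*} [AddCommGroup V] [Module ℝ V] (x : V)
variable (h : V →ₗ[ℝ] V →ₗ[ℝ] ℝ) (S : V →ₗ[ℝ] V)

lemma RAct_pairWith_cons (T : List V → ℝ) (z : V) (zs : List V) :
    RAct h S T (pairWith x (z :: zs)) = -∑ m ∈ range zs.length,
      (T ((pairWith x zs).set (2 * m) (RR h S x z x)) +
        T (pairWith x (zs.set m (RR h S x z (zs.getD m 0))))) := by
  rw [pairWith, RAct_cons_cons, length_pairWith, sum_range_two_mul]
  refine congrArg _ (sum_congr rfl fun m hm => ?_)
  rw [getD_pairWith_two_mul x 0 zs m (mem_range.1 hm), getD_pairWith_two_mul_add_one,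
    set_pairWith_two_mul_add_one]

variable (ω : V →ₗ[ℝ] V →ₗ[ℝ] ℝ) {k : ℕ} {zs : List V}

lemma Rpow_pairWith_set_smul (hzs : zs.length ≤ k + 1) {m : ℕ} (hm : m < zs.length)
    (c : ℝ) (v : V) :
    Rpow h S ω k (pairWith x (zs.set m (c • v))) = c * Rpow h S ω k (pairWith x (zs.set m v)) := by
  simp only [← set_pairWith_two_mul_add_one]
  exact isHomogeneousUpTo_Rpow h S ω k _ _ (by simp; omega) (by simp; omega) c v

lemma Rpow_set_two_mul_zero (hzs : zs.length ≤ k + 1) {m : ℕ} (hm : m < zs.length) :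
    Rpow h S ω k ((pairWith x zs).set (2 * m) 0) = 0 := by
  simpa using isHomogeneousUpTo_Rpow h S ω k (pairWith x zs) (2 * m) (by simp; omega)
    (by simp; omega) 0 0

theorem Rpow_pairWith {s : Set V} {u : V} {ε c : ℝ} (hu : u ∈ s)
    (hRx : ∀ z ∈ s, RR h S x z x = 0) (hRs : ∀ z ∈ s, ∀ z' ∈ s, RR h S x z z' = ε • u)
    (hω : ∀ z ∈ s, ω x z = c) (k : ℕ) (zs : List V) (hlen : zs.length = k + 1)
    (hzs : ∀ z ∈ zs, z ∈ s) :
    Rpow h S ω k (pairWith x zs) = (-ε) ^ k * k.factorial * c := by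
  induction k generalizing zs with
  | zero =>
    obtain ⟨z, rfl⟩ := List.length_eq_one_iff.1 hlen
    simp [pairWith, Rpow, hω z (hzs z (List.mem_singleton_self z))]
  | succ k ih =>
    obtain ⟨z, zs, rfl⟩ := List.exists_cons_of_length_eq_add_one hlen
    have hz : z ∈ s := hzs z List.mem_cons_self
    have hlen' : zs.length = k + 1 := by simpa using hlen
    have hterm : ∀ m ∈ range zs.length,
        Rpow h S ω k ((pairWith x zs).set (2 * m) (RR h S x z x)) +
          Rpow h S ω k (pairWith x (zs.set m (RR h S x z (zs.getD m 0)))) =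
        ε * ((-ε) ^ k * k.factorial * c) := by
      intro m hm
      have hm : m < zs.length := mem_range.1 hm
      have hzm : zs.getD m 0 ∈ s := by
        rw [List.getD_eq_getElem zs 0 hm]
        exact hzs _ (List.mem_cons_of_mem _ (List.getElem_mem hm))
      have hset : ∀ w ∈ zs.set m u, w ∈ s := fun w hw =>
        (List.mem_or_eq_of_mem_set hw).elim (fun hw => hzs w (List.mem_cons_of_mem _ hw))
          (· ▸ hu)
      rw [hRx z hz, Rpow_set_two_mul_zero x h S ω hlen'.le hm, hRs z hz _ hzm,
        Rpow_pairWith_set_smul x h S ω hlen'.le hm, ih _ (by simpa using hlen') hset, zero_add]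
    rw [Rpow_succ, RAct_pairWith_cons, sum_congr rfl hterm, sum_const, card_range, hlen',
      Nat.factorial_succ]
    push_cast
    ring

end Computation

theorem stmt11_general
    {V : Type*} [AddCommGroup V] [Module ℝ V]
    (n : ℕ) (hn : 2 ≤ n) (e : ℕ → V)
    (h ω : V →ₗ[ℝ] V →ₗ[ℝ] ℝ)
    (halt : ∀ X, ω X X = 0)
    (S : V →ₗ[ℝ] V)
    (α ε : ℝ)
    (hS1 : S (e 1) = α • e 1 + e 2)
    (hh22 : h (e 2) (e 2) = ε)
    (hh0 : ∀ i j, 1 ≤ i → i ≤ 2 * n → 1 ≤ j → j ≤ 2 * n → min i j ≤ 3 →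
      ¬((i = 1 ∧ j = 3) ∨ (i = 3 ∧ j = 1) ∨ (i = 2 ∧ j = 2)) → h (e i) (e j) = 0)
    (p : ℕ) :
    Rpow h S ω p (pairList (e 1) (e 2) (p + 1)) =
      (-1) ^ p * ε ^ p * (Nat.factorial p : ℝ) * ω (e 1) (e 2) := by
  obtain ⟨h11, h12, h21⟩ : h (e 1) (e 1) = 0 ∧ h (e 1) (e 2) = 0 ∧ h (e 2) (e 1) = 0 := by
    refine ⟨hh0 1 1 ?_ ?_ ?_ ?_ ?_ ?_, hh0 1 2 ?_ ?_ ?_ ?_ ?_ ?_, hh0 2 1 ?_ ?_ ?_ ?_ ?_ ?_⟩ <;>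
      omega
  have hRx : ∀ z ∈ ({e 2, S (e 1)} : Set V), RR h S (e 1) z (e 1) = 0 := by
    rintro z (rfl | rfl) <;> simp [RR, hS1, h11, h21]
  have hRs : ∀ z ∈ ({e 2, S (e 1)} : Set V), ∀ z' ∈ ({e 2, S (e 1)} : Set V),
      RR h S (e 1) z z' = ε • S (e 1) := by
    rintro z (rfl | rfl) z' (rfl | rfl) <;> simp [RR, hS1, h11, h12, h21, hh22]
  have hω : ∀ z ∈ ({e 2, S (e 1)} : Set V), ω (e 1) z = ω (e 1) (e 2) := by
    rintro z (rfl | rfl) <;> simp [hS1, halt]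
  rw [pairList_eq_pairWith, Rpow_pairWith (e 1) h S ω (by simp) hRx hRs hω p _ (by simp)
    (fun z hz => by simp [List.eq_of_mem_replicate hz]), neg_pow]

theorem stmt11
    {V : Type*} [AddCommGroup V] [Module ℝ V]
    (n : ℕ) (hn : 2 ≤ n) (e : ℕ → V)
    (hbasis : ∃ b : Module.Basis (Fin (2 * n)) ℝ V, ∀ i : Fin (2 * n), b i = e (i.1 + 1))
    (h ω : V →ₗ[ℝ] V →ₗ[ℝ] ℝ)
    (hsymm : ∀ X Y, h X Y = h Y X)
    (halt : ∀ X, ω X X = 0)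
    (S : V →ₗ[ℝ] V)
    (α ε : ℝ) (hε : ε = 1 ∨ ε = -1)
    (hS1 : S (e 1) = α • e 1 + e 2)
    (hS2 : S (e 2) = α • e 2 + e 3)
    (hS3 : S (e 3) = α • e 3)
    (hh13 : h (e 1) (e 3) = ε) (hh31 : h (e 3) (e 1) = ε) (hh22 : h (e 2) (e 2) = ε)
    (hh0 : ∀ i j, 1 ≤ i → i ≤ 2 * n → 1 ≤ j → j ≤ 2 * n → min i j ≤ 3 →
      ¬((i = 1 ∧ j = 3) ∨ (i = 3 ∧ j = 1) ∨ (i = 2 ∧ j = 2)) → h (e i) (e j) = 0)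
    (p : ℕ) (hp : 1 ≤ p) :
    Rpow h S ω p (pairList (e 1) (e 2) (p + 1)) =
      (-1) ^ p * ε ^ p * (Nat.factorial p : ℝ) * ω (e 1) (e 2) :=
  stmt11_general n hn e h ω halt S α ε hS1 hh22 hh0 p
end
end
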